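/- arXiv:0704.3086 — 3 statements merged into one kernel-verified Lean document; each statement's English description precedes it below -/
import Mathlib

section
/- The Fourier symbol bound: the quantity c(k) := Σ_{k' ∈ k + (2πZ)^d} (1/(-L̂)(k)) · ((-Δ̂)(k')/(1 + (-Δ̂)(k'))) · Π_{j=1}^d (2 sin(k'_j/2)/k'_j)² is uniformly bounded over k in the set B := {k ∈ [-π,π]^d : k_j ≠ 0 for all j}. -/
open MeasureTheory Real Filter ProbabilityTheory
open scoped ENNReal NNReal

noncomputable section

variable {d : ℕ}

/-- The Fourier symbol `(-L̂)(k) = 4 Σ_j sin²(k_j/2)` of the negative discrete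
Laplacian on `ℤ^d`. -/
def dSym (d : ℕ) (k : Fin d → ℝ) : ℝ := 4 * ∑ j, Real.sin (k j / 2) ^ 2

/-- The quantity
`c(k) = Σ_{k' ∈ k + (2πℤ)^d} (1/(-L̂)(k)) ((-Δ̂)(k')/(1+(-Δ̂)(k'))) Π_j (2 sin(k'_j/2)/k'_j)²`,
where `(-Δ̂)(k') = |k'|²`. -/
def ck (d : ℕ) (k : Fin d → ℝ) : ℝ :=
  ∑' ℓ : Fin d → ℤ,
    (1 / dSym d k) *
      ((∑ j, (k j + 2 * Real.pi * ℓ j) ^ 2) / (1 + ∑ j, (k j + 2 * Real.pi * ℓ j) ^ 2)) *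
      ∏ j, (2 * Real.sin ((k j + 2 * Real.pi * ℓ j) / 2) / (k j + 2 * Real.pi * ℓ j)) ^ 2

/-! Every term of the series is dominated by `π² / 4 · ∏ⱼ (1 + ℓⱼ²)⁻¹`, which is summable over
`ℤ^d` and independent of `k`. Each sinc factor is at most `1`, and at most
`sin² (kⱼ / 2) / (1 + ℓⱼ²)` when `ℓⱼ ≠ 0`, because then `|kⱼ + 2πℓⱼ| ≥ π |ℓⱼ|`. The singular
prefactor `1 / (-L̂)(k)` is compensated at `ℓ = 0` by `|k|² ≤ (π² / 4) (-L̂)(k)` (Jordan's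
inequality), and at `ℓ ≠ 0` by the numerator `sin² (k_{j₀} / 2) ≤ (-L̂)(k)` of a coordinate
with `ℓ_{j₀} ≠ 0`. -/

lemma four_mul_sin_sq_half_le_sq (x : ℝ) : 4 * Real.sin (x / 2) ^ 2 ≤ x ^ 2 := by
  nlinarith [Real.sin_sq_le_sq (x := x / 2)]

lemma sq_two_mul_sin_half_div_le_one (x : ℝ) : (2 * Real.sin (x / 2) / x) ^ 2 ≤ 1 := by
  rw [div_pow, mul_pow]
  exact div_le_one_of_le₀ (by linarith [four_mul_sin_sq_half_le_sq x]) (sq_nonneg x)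

lemma sq_le_pi_sq_mul_sin_sq_half {x : ℝ} (hx : |x| ≤ π) :
    x ^ 2 ≤ π ^ 2 * Real.sin (x / 2) ^ 2 := by
  have hJordan : 2 / π * |x / 2| ≤ |Real.sin (x / 2)| :=
    Real.mul_abs_le_abs_sin (by rw [abs_div, abs_two]; linarith)
  have hx' : |x| ≤ π * |Real.sin (x / 2)| := by
    rw [abs_div, abs_two] at hJordan
    rw [← div_le_iff₀' pi_pos]
    linarith [show 2 / π * (|x| / 2) = |x| / π by ring]
  rw [← sq_abs x, ← sq_abs (Real.sin _), ← mul_pow]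
  exact pow_le_pow_left₀ (abs_nonneg x) hx' 2

lemma sin_sq_half_add_two_pi_mul_int (x : ℝ) (n : ℤ) :
    Real.sin ((x + 2 * π * n) / 2) ^ 2 = Real.sin (x / 2) ^ 2 := by
  rw [show (x + 2 * π * n) / 2 = x / 2 + n * π by ring, Real.sin_add_int_mul_pi, mul_pow,
    ← sq_abs ((-1 : ℝ) ^ n), abs_neg_one_zpow, one_pow, one_mul]

lemma four_mul_one_add_sq_le_sq_add_two_pi_mul {x : ℝ} (hx : |x| ≤ π) {n : ℤ} (hn : n ≠ 0) :
    4 * (1 + (n : ℝ) ^ 2) ≤ (x + 2 * π * n) ^ 2 := by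
  have hn1 : (1 : ℝ) ≤ |(n : ℝ)| := by exact_mod_cast Int.one_le_abs hn
  have hdist : π * |(n : ℝ)| ≤ |x + 2 * π * n| := by
    have := abs_sub_abs_le_abs_sub (2 * π * n) (-x)
    rw [abs_neg, sub_neg_eq_add, add_comm, abs_mul, abs_mul, abs_two, abs_of_pos pi_pos] at this
    nlinarith [mul_nonneg pi_pos.le (sub_nonneg.2 hn1)]
  have hsq : π ^ 2 * (n : ℝ) ^ 2 ≤ (x + 2 * π * n) ^ 2 := by
    rw [← sq_abs (x + _), ← sq_abs (n : ℝ), ← mul_pow]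
    exact pow_le_pow_left₀ (by positivity) hdist 2
  have hn2 : (1 : ℝ) ≤ (n : ℝ) ^ 2 := by rw [← sq_abs]; nlinarith
  have hπ : 9 ≤ π ^ 2 := by nlinarith [pi_gt_three]
  nlinarith [mul_le_mul_of_nonneg_right hπ (sq_nonneg (n : ℝ))]

lemma sq_two_mul_sin_half_div_add_two_pi_mul_le {x : ℝ} (hx : |x| ≤ π) {n : ℤ} (hn : n ≠ 0) :
    (2 * Real.sin ((x + 2 * π * n) / 2) / (x + 2 * π * n)) ^ 2 ≤
      Real.sin (x / 2) ^ 2 / (1 + (n : ℝ) ^ 2) := by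
  rw [div_pow, mul_pow, sin_sq_half_add_two_pi_mul_int]
  calc 2 ^ 2 * Real.sin (x / 2) ^ 2 / (x + 2 * π * n) ^ 2
      ≤ 2 ^ 2 * Real.sin (x / 2) ^ 2 / (4 * (1 + (n : ℝ) ^ 2)) :=
        div_le_div_of_nonneg_left (by positivity) (by positivity)
          (four_mul_one_add_sq_le_sq_add_two_pi_mul hx hn)
    _ = Real.sin (x / 2) ^ 2 / (1 + (n : ℝ) ^ 2) := by
        rw [show (2 : ℝ) ^ 2 = 4 by norm_num, mul_div_mul_left _ _ four_ne_zero]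

lemma sq_two_mul_sin_half_div_add_two_pi_mul_le_inv {x : ℝ} (hx : |x| ≤ π) (n : ℤ) :
    (2 * Real.sin ((x + 2 * π * n) / 2) / (x + 2 * π * n)) ^ 2 ≤ (1 + (n : ℝ) ^ 2)⁻¹ := by
  rcases eq_or_ne n 0 with rfl | hn
  · simpa using sq_two_mul_sin_half_div_le_one x
  · calc _ ≤ Real.sin (x / 2) ^ 2 / (1 + (n : ℝ) ^ 2) :=
          sq_two_mul_sin_half_div_add_two_pi_mul_le hx hn
      _ ≤ 1 / (1 + (n : ℝ) ^ 2) :=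
          div_le_div_of_nonneg_right (Real.sin_sq_le_one _) (by positivity)
      _ = (1 + (n : ℝ) ^ 2)⁻¹ := one_div _

lemma summable_inv_one_add_sq_int : Summable fun n : ℤ => (1 + (n : ℝ) ^ 2)⁻¹ := by
  refine (Real.summable_one_div_int_pow.mpr one_lt_two).of_norm_bounded_eventually ?_
  filter_upwards [eventually_cofinite_ne 0] with n hn
  rw [norm_inv, Real.norm_of_nonneg (by positivity), one_div]
  exact inv_anti₀ (by positivity) (by linarith)

lemma sum_prod_le_tsum_pow {ι α : Type*} [Fintype ι] {w : α → ℝ} (hw0 : 0 ≤ w)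
    (hw : Summable w) (s : Finset (ι → α)) :
    ∑ ℓ ∈ s, ∏ i, w (ℓ i) ≤ (∑' a, w a) ^ Fintype.card ι := by
  classical
  let t : ι → Finset α := fun i => s.image (· i)
  calc ∑ ℓ ∈ s, ∏ i, w (ℓ i) ≤ ∑ ℓ ∈ Fintype.piFinset t, ∏ i, w (ℓ i) :=
        Finset.sum_le_sum_of_subset_of_nonneg
          (fun ℓ hℓ => Fintype.mem_piFinset.mpr fun i => Finset.mem_image_of_mem _ hℓ)
          (fun ℓ _ _ => Finset.prod_nonneg fun i _ => hw0 _)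
    _ = ∏ i, ∑ a ∈ t i, w a := (Finset.prod_univ_sum t fun _ => w).symm
    _ ≤ ∏ _i : ι, ∑' a, w a :=
        Finset.prod_le_prod (fun i _ => Finset.sum_nonneg fun a _ => hw0 a)
          fun i _ => hw.sum_le_tsum _ fun a _ => hw0 a
    _ = (∑' a, w a) ^ Fintype.card ι := Finset.prod_const _

lemma dSym_nonneg (k : Fin d → ℝ) : 0 ≤ dSym d k := by
  unfold dSym; positivity

lemma sin_sq_half_le_dSym (k : Fin d → ℝ) (j : Fin d) : Real.sin (k j / 2) ^ 2 ≤ dSym d k := by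
  have := Finset.single_le_sum (fun i _ => sq_nonneg (Real.sin (k i / 2))) (Finset.mem_univ j)
  unfold dSym
  linarith [sq_nonneg (Real.sin (k j / 2))]

lemma sum_sq_le_pi_sq_div_four_mul_dSym {k : Fin d → ℝ} (hk : ∀ j, |k j| ≤ π) :
    ∑ j, k j ^ 2 ≤ π ^ 2 / 4 * dSym d k := by
  rw [dSym, ← mul_assoc, div_mul_cancel₀ _ four_ne_zero, Finset.mul_sum]
  exact Finset.sum_le_sum fun j _ => sq_le_pi_sq_mul_sin_sq_half (hk j)

def ckTerm (d : ℕ) (k : Fin d → ℝ) (ℓ : Fin d → ℤ) : ℝ :=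
  (1 / dSym d k) *
    ((∑ j, (k j + 2 * Real.pi * ℓ j) ^ 2) / (1 + ∑ j, (k j + 2 * Real.pi * ℓ j) ^ 2)) *
    ∏ j, (2 * Real.sin ((k j + 2 * Real.pi * ℓ j) / 2) / (k j + 2 * Real.pi * ℓ j)) ^ 2

lemma ckTerm_zero_le {k : Fin d → ℝ} (hk : ∀ j, |k j| ≤ π) : ckTerm d k 0 ≤ π ^ 2 / 4 := by
  have hD := dSym_nonneg k
  have hQ : 0 ≤ ∑ j, k j ^ 2 := by positivity
  simp only [ckTerm, Pi.zero_apply, Int.cast_zero, mul_zero, add_zero]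
  calc _ ≤ 1 / dSym d k * (∑ j, k j ^ 2) * 1 := by
        gcongr
        · exact div_le_self hQ (by linarith)
        · exact Finset.prod_le_one (fun j _ => sq_nonneg _)
            fun j _ => sq_two_mul_sin_half_div_le_one _
    _ ≤ π ^ 2 / 4 := by
        rw [mul_one, one_div_mul_eq_div]
        exact div_le_of_le_mul₀ hD (by positivity) (sum_sq_le_pi_sq_div_four_mul_dSym hk)

lemma ckTerm_le_prod_of_ne_zero {k : Fin d → ℝ} (hk : ∀ j, |k j| ≤ π) {ℓ : Fin d → ℤ}
    (hℓ : ℓ ≠ 0) : ckTerm d k ℓ ≤ ∏ j, (1 + (ℓ j : ℝ) ^ 2)⁻¹ := by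
  obtain ⟨j₀, hj₀⟩ := Function.ne_iff.mp hℓ
  have hD := dSym_nonneg k
  set f : Fin d → ℝ := fun j =>
    (2 * Real.sin ((k j + 2 * π * ℓ j) / 2) / (k j + 2 * π * ℓ j)) ^ 2
  have hj₀_le : 1 / dSym d k * f j₀ ≤ (1 + (ℓ j₀ : ℝ) ^ 2)⁻¹ :=
    calc 1 / dSym d k * f j₀
        ≤ 1 / dSym d k * (Real.sin (k j₀ / 2) ^ 2 / (1 + (ℓ j₀ : ℝ) ^ 2)) := by
          gcongr; exact sq_two_mul_sin_half_div_add_two_pi_mul_le (hk j₀) hj₀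
      _ = Real.sin (k j₀ / 2) ^ 2 / dSym d k * (1 + (ℓ j₀ : ℝ) ^ 2)⁻¹ := by ring
      _ ≤ 1 * (1 + (ℓ j₀ : ℝ) ^ 2)⁻¹ := by
          gcongr; exact div_le_one_of_le₀ (sin_sq_half_le_dSym k j₀) hD
      _ = (1 + (ℓ j₀ : ℝ) ^ 2)⁻¹ := one_mul _
  have hQ : 0 ≤ ∑ j, (k j + 2 * π * ℓ j) ^ 2 := by positivity
  calc ckTerm d k ℓ ≤ 1 / dSym d k * 1 * ∏ j, f j := by
        unfold ckTerm
        gcongr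
        exact div_le_one_of_le₀ (by linarith) (by positivity)
    _ = 1 / dSym d k * f j₀ * ∏ j ∈ Finset.univ.erase j₀, f j := by
        rw [mul_one, mul_assoc, Finset.mul_prod_erase _ _ (Finset.mem_univ j₀)]
    _ ≤ (1 + (ℓ j₀ : ℝ) ^ 2)⁻¹ * ∏ j ∈ Finset.univ.erase j₀, (1 + (ℓ j : ℝ) ^ 2)⁻¹ := by
        gcongr with j
        exact sq_two_mul_sin_half_div_add_two_pi_mul_le_inv (hk j) (ℓ j)
    _ = ∏ j, (1 + (ℓ j : ℝ) ^ 2)⁻¹ :=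
        Finset.mul_prod_erase _ (fun j => (1 + (ℓ j : ℝ) ^ 2)⁻¹) (Finset.mem_univ j₀)

lemma ckTerm_le {k : Fin d → ℝ} (hk : ∀ j, |k j| ≤ π) (ℓ : Fin d → ℤ) :
    ckTerm d k ℓ ≤ π ^ 2 / 4 * ∏ j, (1 + (ℓ j : ℝ) ^ 2)⁻¹ := by
  rcases eq_or_ne ℓ 0 with rfl | hℓ
  · simpa using ckTerm_zero_le hk
  · calc ckTerm d k ℓ ≤ ∏ j, (1 + (ℓ j : ℝ) ^ 2)⁻¹ := ckTerm_le_prod_of_ne_zero hk hℓ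
      _ ≤ π ^ 2 / 4 * ∏ j, (1 + (ℓ j : ℝ) ^ 2)⁻¹ :=
          le_mul_of_one_le_left (by positivity) (by nlinarith [pi_gt_three])

/-- Uniform bound on the Fourier symbol ratio.
The quantity `c(k)` is uniformly bounded over the set
`B = {k ∈ [-π,π]^d : k_j ≠ 0 for all j}`. -/
theorem ck_uniformly_bounded (d : ℕ) :
    ∃ C : ℝ, ∀ k : Fin d → ℝ,
      (∀ j, |k j| ≤ Real.pi ∧ k j ≠ 0) → ck d k ≤ C := by
  refine ⟨π ^ 2 / 4 * (∑' n : ℤ, (1 + (n : ℝ) ^ 2)⁻¹) ^ d, fun k hk => ?_⟩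
  have hw0 : 0 ≤ fun n : ℤ => (1 + (n : ℝ) ^ 2)⁻¹ := fun n => by positivity
  refine tsum_le_of_sum_le' (by positivity) fun s => ?_
  calc ∑ ℓ ∈ s, ckTerm d k ℓ ≤ ∑ ℓ ∈ s, π ^ 2 / 4 * ∏ j, (1 + (ℓ j : ℝ) ^ 2)⁻¹ :=
        Finset.sum_le_sum fun ℓ _ => ckTerm_le (fun j => (hk j).1) ℓ
    _ = π ^ 2 / 4 * ∑ ℓ ∈ s, ∏ j, (1 + (ℓ j : ℝ) ^ 2)⁻¹ := (Finset.mul_sum _ _ _).symm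
    _ ≤ π ^ 2 / 4 * (∑' n : ℤ, (1 + (n : ℝ) ^ 2)⁻¹) ^ d := by
        gcongr
        simpa using sum_prod_le_tsum_pow hw0 summable_inv_one_add_sq_int s
end
end

section
/- Every vector field u in the L² closure of gradients of local functions of the conductance environment satisfies the cycle condition: for any finite nearest-neighbor cycle (x_0, x_1, ..., x_n = x_0) in Z^d, Σ_{j=0}^{n-1} u(τ_{x_j}κ, x_{j+1} - x_j) = 0 for ν-a.e. κ. Consequently, u extends to a unique shift-covariant function ū : Ω × Z^d → R^d with ū(κ, 0) = 0. -/
/-!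
Along a nearest-neighbour path the sum of a gradient `∇h` telescopes to `h(τ_end κ) - h(κ)`, so
it vanishes along loops. By translation invariance of `ν`, summing a field along a fixed path of
length `n` is an operator of norm at most `n` on `L²(ν)`, and by ellipticity the `L²_∇` norm
controls the `L²(ν)` norm of every component. Hence the loop sums of `u` are `L²`-limits of zero
and vanish almost surely. Given the cycle condition, `ū(κ, x)` is the sum of `u` along any path
from `0` to `x`; conversely shift covariance forces this value along every path, which gives
uniqueness.
-/

open MeasureTheory Real Filter ProbabilityTheory
open scoped ENNReal

noncomputable section

variable {d : ℕ}
/-- Positively oriented edges of `ℤ^d`: a base point together with a direction. -/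
abbrev EdgeZ (d : ℕ) := ((Fin d → ℤ) × Fin d)

/-- Configurations indexed by (positively oriented) edges: gradients or conductances. -/
abbrev Cfg (d : ℕ) := EdgeZ d → ℝ

/-- `sv j n` is `n` times the `j`-th coordinate unit vector of `ℤ^d`. -/
def sv (j : Fin d) (n : ℤ) : Fin d → ℤ := fun i => if i = j then n else 0

/-- Shift of a configuration by a lattice vector `x`. -/
def shf (x : Fin d → ℤ) (κ : Cfg d) : Cfg d := fun e => κ (e.1 + x, e.2)

/-- Translation invariance of a measure on configurations. -/
def TInv (ν : Measure (Cfg d)) : Prop := ∀ x, ν.map (shf x) = ν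

/-- Ergodicity with respect to the group of lattice shifts. -/
def Erg (ν : Measure (Cfg d)) : Prop :=
  ∀ A : Set (Cfg d), MeasurableSet A → (∀ x, shf x ⁻¹' A = A) → ν A = 0 ∨ ν A = 1

/-- Uniform ellipticity: `ε ≤ κ_b ≤ 1/ε` almost surely. -/
def Elliptic (ν : Measure (Cfg d)) : Prop :=
  ∃ ε : ℝ, 0 < ε ∧ ∀ᵐ κ ∂ν, ∀ e, ε ≤ κ e ∧ κ e ≤ 1 / ε
/-- A local function of the environment: depends on finitely many edges. -/
def IsLocal (h : Cfg d → ℝ) : Prop :=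
  ∃ S : Finset (EdgeZ d), ∀ κ κ' : Cfg d, (∀ e ∈ S, κ e = κ' e) → h κ = h κ'

/-- The gradient `(∇h)_j = h ∘ τ_{ê_j} - h` of a function of the environment. -/
def grad (h : Cfg d → ℝ) : Cfg d → Fin d → ℝ :=
  fun κ j => h (shf (sv j 1) κ) - h κ

/-- The `L²_vec(ν)` inner product `(u,v) = E_ν[Σ_b κ_b u(κ,b) v(κ,b)]`. -/
def ivec (ν : Measure (Cfg d)) (u v : Cfg d → Fin d → ℝ) : ℝ :=
  ∫ κ, ∑ j, κ (0, j) * u κ j * v κ j ∂ν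

/-- Square integrability with respect to `ν`. -/
def SqInt (ν : Measure (Cfg d)) (h : Cfg d → ℝ) : Prop :=
  ∫⁻ κ, ENNReal.ofReal ((h κ) ^ 2) ∂ν < ⊤

/-- Membership in `L²_vec(ν)`: measurable components, each square integrable. -/
def MemL2vec (ν : Measure (Cfg d)) (u : Cfg d → Fin d → ℝ) : Prop :=
  (∀ j, Measurable fun κ => u κ j) ∧ ∀ j, SqInt ν fun κ => u κ j

/-- Membership in `L²_∇(ν)`, the closure in the `L²_vec(ν)` norm of gradients of
local functions. -/
def MemGradClos (ν : Measure (Cfg d)) (u : Cfg d → Fin d → ℝ) : Prop :=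
  ∀ δ : ℝ, 0 < δ → ∃ h : Cfg d → ℝ, IsLocal h ∧ Measurable h ∧
    ∫⁻ κ, ENNReal.ofReal (∑ j, κ (0, j) * (u κ j - grad h κ j) ^ 2) ∂ν
      < ENNReal.ofReal δ

/-- The extension of a vector field to negative directions: `u(κ,-b) = -u(τ_{-b}κ, b)`.
A signed step is a pair `(j, s)` with `s = true` for `+ê_j`, `false` for `-ê_j`. -/
def uExt (u : Cfg d → Fin d → ℝ) (κ : Cfg d) (s : Fin d × Bool) : ℝ :=
  if s.2 then u κ s.1 else -u (shf (-sv s.1 1) κ) s.1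

/-- The lattice displacement of a signed step. -/
def stepOf (s : Fin d × Bool) : Fin d → ℤ :=
  if s.2 then sv s.1 1 else -sv s.1 1

/-- The sum of a vector field along a nearest-neighbor path started at the origin,
written in environment coordinates. -/
def pathSum (u : Cfg d → Fin d → ℝ) : Cfg d → List (Fin d × Bool) → ℝ
  | _, [] => 0
  | κ, s :: r => uExt u κ s + pathSum u (shf (stepOf s) κ) r

/-- The cycle condition: the sum of the field along every closed nearest-neighbor
loop vanishes. -/
def CycleCond (u : Cfg d → Fin d → ℝ) (κ : Cfg d) : Prop :=
  ∀ ℓ : List (Fin d × Bool), (ℓ.map stepOf).sum = 0 → pathSum u κ ℓ = 0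

/-- The divergence `(Lu)(κ) = Σ_b [κ_b u(κ,b) - (τ_{-b}κ)_b u(τ_{-b}κ,b)]`. -/
def divg (u : Cfg d → Fin d → ℝ) (κ : Cfg d) : ℝ :=
  ∑ j, (κ (0, j) * u κ j
    - shf (-sv j 1) κ (0, j) * u (shf (-sv j 1) κ) j)

/-- A local `ℝ^d`-valued function of the environment. -/
def IsLocalV (h : Cfg d → (Fin d → ℝ)) : Prop :=
  ∃ S : Finset (EdgeZ d), ∀ κ κ' : Cfg d, (∀ e ∈ S, κ e = κ' e) → h κ = h κ'

/-- Gradient of an `ℝ^d`-valued function of the environment. -/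
def gradV (h : Cfg d → (Fin d → ℝ)) : Cfg d → Fin d → (Fin d → ℝ) :=
  fun κ j => h (shf (sv j 1) κ) - h κ

/-- Membership in the closure `L²_∇(ν)` of gradients of local functions, for
`ℝ^d`-valued vector fields. -/
def MemGradClosV (ν : Measure (Cfg d)) (u : Cfg d → Fin d → (Fin d → ℝ)) : Prop :=
  ∀ δ : ℝ, 0 < δ → ∃ h : Cfg d → (Fin d → ℝ), IsLocalV h ∧ Measurable h ∧
    ∫⁻ κ, ENNReal.ofReal (∑ j, κ (0, j) * (∑ k, (u κ j k - gradV h κ j k) ^ 2)) ∂ν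
      < ENNReal.ofReal δ

open scoped NNReal

lemma eLpNorm_two_le_of_lintegral_sq_le {α : Type*} [MeasurableSpace α] {μ : Measure α}
    {f : α → ℝ} {δ : ℝ≥0∞} (h : ∫⁻ x, ENNReal.ofReal (f x ^ 2) ∂μ ≤ δ ^ 2) :
    eLpNorm f 2 μ ≤ δ := by
  have hpow := eLpNorm_nnreal_pow_eq_lintegral (f := f) (μ := μ) (p := 2) two_ne_zero
  simp only [NNReal.coe_ofNat, ENNReal.coe_ofNat, ENNReal.rpow_two] at hpow
  have hsq (x : α) : ‖f x‖ₑ ^ 2 = ENNReal.ofReal (f x ^ 2) := by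
    rw [Real.enorm_eq_ofReal_abs, ← ENNReal.ofReal_pow (abs_nonneg _), sq_abs]
  rw [← ENNReal.pow_le_pow_left_iff two_ne_zero, hpow]
  simpa only [hsq] using h

section Shifts

lemma shf_shf (a b : Fin d → ℤ) (κ : Cfg d) : shf a (shf b κ) = shf (a + b) κ := by
  funext e; simp [shf, add_assoc]

@[simp]
lemma shf_zero (κ : Cfg d) : shf 0 κ = κ := by
  funext e; simp [shf]

lemma measurable_shf (x : Fin d → ℤ) : Measurable (shf (d := d) x) :=
  measurable_pi_lambda _ fun _ => measurable_pi_apply _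

variable {ν : Measure (Cfg d)}

lemma TInv.ae_forall_shf (hTI : TInv ν) {P : Cfg d → Prop} (hP : ∀ᵐ κ ∂ν, P κ) :
    ∀ᵐ κ ∂ν, ∀ x, P (shf x κ) :=
  ae_all_iff.2 fun x => ae_of_ae_map (measurable_shf x).aemeasurable (by rwa [hTI x])

lemma TInv.eLpNorm_comp_shf (hTI : TInv ν) {f : Cfg d → ℝ} (hf : Measurable f)
    (p : ℝ≥0∞) (x : Fin d → ℤ) : eLpNorm (fun κ => f (shf x κ)) p ν = eLpNorm f p ν := by
  conv_rhs => rw [← hTI x]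
  exact (eLpNorm_map_measure (by rw [hTI x]; exact hf.aestronglyMeasurable)
    (measurable_shf x).aemeasurable).symm

end Shifts

section Paths

variable (v : Cfg d → Fin d → ℝ)

lemma stepOf_not (s : Fin d × Bool) : stepOf (d := d) (s.1, !s.2) = -stepOf s := by
  obtain ⟨j, _ | _⟩ := s <;> simp [stepOf]

lemma uExt_not (κ : Cfg d) (s : Fin d × Bool) :
    uExt v (shf (stepOf s) κ) (s.1, !s.2) = -uExt v κ s := by
  obtain ⟨j, _ | _⟩ := s <;> simp [uExt, stepOf, shf_shf]

lemma pathSum_append (κ : Cfg d) (ℓ₁ ℓ₂ : List (Fin d × Bool)) :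
    pathSum v κ (ℓ₁ ++ ℓ₂) = pathSum v κ ℓ₁ + pathSum v (shf (ℓ₁.map stepOf).sum κ) ℓ₂ := by
  induction ℓ₁ generalizing κ with
  | nil => simp [pathSum]
  | cons s ℓ ih => simp [pathSum, ih, shf_shf, add_assoc, add_comm (stepOf s)]

lemma pathSum_sub (w : Cfg d → Fin d → ℝ) (κ : Cfg d) (ℓ : List (Fin d × Bool)) :
    pathSum (fun κ' j => v κ' j - w κ' j) κ ℓ = pathSum v κ ℓ - pathSum w κ ℓ := by
  induction ℓ generalizing κ with
  | nil => simp [pathSum]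
  | cons s ℓ ih => obtain ⟨j, _ | _⟩ := s <;> simp [pathSum, ih, uExt] <;> ring

lemma pathSum_grad (h : Cfg d → ℝ) (κ : Cfg d) (ℓ : List (Fin d × Bool)) :
    pathSum (grad h) κ ℓ = h (shf (ℓ.map stepOf).sum κ) - h κ := by
  induction ℓ generalizing κ with
  | nil => simp [pathSum]
  | cons s ℓ ih =>
    have hstep : uExt (grad h) κ s = h (shf (stepOf s) κ) - h κ := by
      obtain ⟨j, _ | _⟩ := s <;> simp [uExt, grad, stepOf, shf_shf]
    simp only [pathSum, hstep, ih, List.map_cons, List.sum_cons, shf_shf, add_comm (stepOf s)]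
    ring

def revPath (ℓ : List (Fin d × Bool)) : List (Fin d × Bool) :=
  (ℓ.map fun s => (s.1, !s.2)).reverse

lemma sum_map_stepOf_revPath (ℓ : List (Fin d × Bool)) :
    ((revPath ℓ).map stepOf).sum = -(ℓ.map stepOf).sum := by
  induction ℓ with
  | nil => simp [revPath]
  | cons s ℓ ih => simp_all [revPath, stepOf_not, add_comm]

lemma pathSum_revPath (κ : Cfg d) (ℓ : List (Fin d × Bool)) :
    pathSum v (shf (ℓ.map stepOf).sum κ) (revPath ℓ) = -pathSum v κ ℓ := by
  induction ℓ generalizing κ with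
  | nil => simp [revPath, pathSum]
  | cons s ℓ ih =>
    have hrev : revPath (s :: ℓ) = revPath ℓ ++ [(s.1, !s.2)] := by simp [revPath]
    have hshf : shf ((s :: ℓ).map stepOf).sum κ = shf (ℓ.map stepOf).sum (shf (stepOf s) κ) := by
      simp [shf_shf, add_comm]
    rw [hrev, pathSum_append, hshf, ih, sum_map_stepOf_revPath, shf_shf, neg_add_cancel, shf_zero]
    simp [pathSum, uExt_not]

variable {v} in
lemma CycleCond.pathSum_eq {κ : Cfg d} (hc : CycleCond v κ) {ℓ₁ ℓ₂ : List (Fin d × Bool)}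
    (hs : (ℓ₁.map stepOf).sum = (ℓ₂.map stepOf).sum) : pathSum v κ ℓ₁ = pathSum v κ ℓ₂ := by
  have hloop := hc (ℓ₁ ++ revPath ℓ₂) (by simp [sum_map_stepOf_revPath, hs])
  rw [pathSum_append, hs, pathSum_revPath] at hloop
  linarith

end Paths

section Extension

variable {v : Cfg d → Fin d → ℝ} {κ : Cfg d}

def canonicalPath (x : Fin d → ℤ) : List (Fin d × Bool) :=
  (List.finRange d).flatMap fun j => List.replicate (x j).natAbs (j, decide (0 ≤ x j))

lemma sum_map_stepOf_canonicalPath (x : Fin d → ℤ) :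
    ((canonicalPath x).map stepOf).sum = x := by
  have hflat (l : List (Fin d)) (f : Fin d → List (Fin d × Bool)) :
      ((l.flatMap f).map stepOf).sum = (l.map fun j => ((f j).map stepOf).sum).sum := by
    induction l <;> simp_all
  rw [canonicalPath, hflat, ← Fin.sum_univ_def]
  funext i
  simp only [List.map_replicate, List.sum_replicate, Finset.sum_apply]
  rw [Finset.sum_eq_single i (fun c _ hc => by
    simp only [Pi.smul_apply, stepOf]; split_ifs <;> simp [sv, hc.symm]) (by simp)]
  rcases le_or_gt 0 (x i) with hx | hx <;> simp [stepOf, sv, hx, not_le.2, abs_of_neg]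

@[simp]
lemma canonicalPath_zero : canonicalPath (0 : Fin d → ℤ) = [] := by
  simp [canonicalPath]

/-- The extension `ū(κ, x)`. -/
def pathExt (v : Cfg d → Fin d → ℝ) (κ : Cfg d) (x : Fin d → ℤ) : ℝ :=
  pathSum v κ (canonicalPath x)

@[simp]
lemma pathExt_zero : pathExt v κ 0 = 0 := by
  simp [pathExt, pathSum]

lemma CycleCond.pathExt_add_sv (hc : CycleCond v κ) (x : Fin d → ℤ) (j : Fin d) :
    pathExt v κ (x + sv j 1) - pathExt v κ x = v (shf x κ) j := by
  have hindep := hc.pathSum_eq (ℓ₁ := canonicalPath (x + sv j 1))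
    (ℓ₂ := canonicalPath x ++ [(j, true)]) (by simp [sum_map_stepOf_canonicalPath, stepOf])
  rw [pathExt, pathExt, hindep, pathSum_append, sum_map_stepOf_canonicalPath]
  simp [pathSum, uExt]

lemma CycleCond.pathExt_sv (hc : CycleCond v κ) (j : Fin d) : pathExt v κ (sv j 1) = v κ j := by
  simpa using hc.pathExt_add_sv 0 j

lemma eq_pathExt_of_sub_eq {w : (Fin d → ℤ) → ℝ} (h0 : w 0 = 0)
    (hcov : ∀ x j, w (x + sv j 1) - w x = v (shf x κ) j) (x : Fin d → ℤ) :
    w x = pathExt v κ x := by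
  have hstep (y : Fin d → ℤ) (s : Fin d × Bool) : w (y + stepOf s) = w y + uExt v (shf y κ) s := by
    obtain ⟨j, _ | _⟩ := s
    · have hback := hcov (y - sv j 1) j
      simp only [sub_add_cancel] at hback
      simp [stepOf, uExt, shf_shf, ← sub_eq_neg_add, ← sub_eq_add_neg]
      linarith
    · simp [stepOf, uExt, ← hcov]
  have hpath (ℓ : List (Fin d × Bool)) (y : Fin d → ℤ) :
      w (y + (ℓ.map stepOf).sum) = w y + pathSum v (shf y κ) ℓ := by
    induction ℓ generalizing y with
    | nil => simp [pathSum]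
    | cons s ℓ ih =>
      rw [List.map_cons, List.sum_cons, ← add_assoc, ih, hstep, pathSum, shf_shf,
        add_comm (stepOf s) y, add_assoc]
  simpa [h0, pathExt, sum_map_stepOf_canonicalPath] using hpath (canonicalPath x) 0

end Extension

section Analysis

variable {ν : Measure (Cfg d)} {v : Cfg d → Fin d → ℝ} {p : ℝ≥0∞}

def IsLpLimitOfGrad (p : ℝ≥0∞) (ν : Measure (Cfg d)) (v : Cfg d → Fin d → ℝ) : Prop :=
  ∀ δ : ℝ≥0, 0 < δ → ∃ h : Cfg d → ℝ, Measurable h ∧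
    ∀ j, eLpNorm (fun κ => v κ j - grad h κ j) p ν ≤ δ

lemma measurable_uExt (hv : ∀ j, Measurable fun κ => v κ j) (s : Fin d × Bool) :
    Measurable fun κ => uExt v κ s := by
  obtain ⟨j, _ | _⟩ := s
  · exact ((hv j).comp (measurable_shf _)).neg
  · exact hv j

lemma measurable_pathSum (hv : ∀ j, Measurable fun κ => v κ j) (ℓ : List (Fin d × Bool)) :
    Measurable fun κ => pathSum v κ ℓ := by
  induction ℓ with
  | nil => exact measurable_const
  | cons s ℓ ih => exact (measurable_uExt hv s).add (ih.comp (measurable_shf _))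

lemma TInv.eLpNorm_pathSum_le (hTI : TInv ν) (hp : 1 ≤ p) (hv : ∀ j, Measurable fun κ => v κ j)
    {C : ℝ≥0∞} (hC : ∀ j, eLpNorm (fun κ => v κ j) p ν ≤ C) (ℓ : List (Fin d × Bool)) :
    eLpNorm (fun κ => pathSum v κ ℓ) p ν ≤ ℓ.length * C := by
  have huExt (s : Fin d × Bool) : eLpNorm (fun κ => uExt v κ s) p ν ≤ C := by
    obtain ⟨j, _ | _⟩ := s
    · have hneg : (fun κ => uExt v κ (j, false)) = -fun κ => v (shf (-sv j 1) κ) j := rfl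
      rw [hneg, eLpNorm_neg, hTI.eLpNorm_comp_shf (hv j)]
      exact hC j
    · exact hC j
  induction ℓ with
  | nil => simp [pathSum]
  | cons s ℓ ih =>
    calc eLpNorm (fun κ => pathSum v κ (s :: ℓ)) p ν
        ≤ eLpNorm (fun κ => uExt v κ s) p ν
          + eLpNorm (fun κ => pathSum v (shf (stepOf s) κ) ℓ) p ν :=
          eLpNorm_add_le (measurable_uExt hv s).aestronglyMeasurable
            ((measurable_pathSum hv ℓ).comp (measurable_shf _)).aestronglyMeasurable hp
      _ ≤ C + ℓ.length * C := by
          rw [hTI.eLpNorm_comp_shf (measurable_pathSum hv ℓ)]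
          exact add_le_add (huExt s) ih
      _ = (s :: ℓ).length * C := by rw [List.length_cons, Nat.cast_succ]; ring

lemma TInv.ae_pathSum_eq_zero (hTI : TInv ν) (hp : 1 ≤ p) (hv : ∀ j, Measurable fun κ => v κ j)
    (happrox : IsLpLimitOfGrad p ν v)
    {ℓ : List (Fin d × Bool)} (hℓ : (ℓ.map stepOf).sum = 0) :
    ∀ᵐ κ ∂ν, pathSum v κ ℓ = 0 := by
  have hsmall (δ : ℝ≥0) (hδ : 0 < δ) :
      eLpNorm (fun κ => pathSum v κ ℓ) p ν ≤ ℓ.length * δ := by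
    obtain ⟨h, hhm, hh⟩ := happrox δ hδ
    have hgrad (κ : Cfg d) :
        pathSum v κ ℓ = pathSum (fun κ' j => v κ' j - grad h κ' j) κ ℓ := by
      rw [pathSum_sub, pathSum_grad, hℓ, shf_zero, sub_self, sub_zero]
    simp_rw [hgrad]
    exact hTI.eLpNorm_pathSum_le hp
      (fun j => (hv j).sub ((hhm.comp (measurable_shf _)).sub hhm)) hh ℓ
  have hzero : eLpNorm (fun κ => pathSum v κ ℓ) p ν = 0 := by
    refine le_antisymm (ENNReal.le_of_forall_pos_le_add fun ε hε _ => ?_) zero_le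
    calc _ ≤ ℓ.length * ((ε / (ℓ.length + 1) : ℝ≥0) : ℝ≥0∞) := hsmall _ (by positivity)
      _ ≤ 0 + ε := by
        rw [zero_add, ← ENNReal.coe_natCast, ← ENNReal.coe_mul, ENNReal.coe_le_coe,
          mul_div_assoc', div_le_iff₀ (by positivity)]
        nlinarith
  exact (eLpNorm_eq_zero_iff (measurable_pathSum hv ℓ).aestronglyMeasurable
    (zero_lt_one.trans_le hp).ne').1 hzero

lemma TInv.ae_cycleCond (hTI : TInv ν) (hp : 1 ≤ p) (hv : ∀ j, Measurable fun κ => v κ j)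
    (happrox : IsLpLimitOfGrad p ν v) :
    ∀ᵐ κ ∂ν, CycleCond v κ := by
  simp only [CycleCond, ae_all_iff, eventually_imp_distrib_left]
  exact fun ℓ hℓ => hTI.ae_pathSum_eq_zero hp hv happrox hℓ

end Analysis

lemma MemGradClosV.isLpLimitOfGrad {ν : Measure (Cfg d)}
    {u : Cfg d → Fin d → (Fin d → ℝ)} (hu : MemGradClosV ν u) (hEll : Elliptic ν) (k : Fin d) :
    IsLpLimitOfGrad 2 ν fun κ j => u κ j k := by
  intro δ hδ
  obtain ⟨ε, hε, hκε⟩ := hEll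
  obtain ⟨H, -, hHm, hH⟩ := hu (ε * δ ^ 2) (by positivity)
  set S : Cfg d → ℝ := fun κ => ∑ j, κ (0, j) * ∑ k, (u κ j k - gradV H κ j k) ^ 2
  refine ⟨fun κ => H κ k, (measurable_pi_apply k).comp hHm,
    fun j => eLpNorm_two_le_of_lintegral_sq_le ?_⟩
  have hpt : ∀ᵐ κ ∂ν, ENNReal.ofReal ((u κ j k - gradV H κ j k) ^ 2)
      ≤ ENNReal.ofReal ε⁻¹ * ENNReal.ofReal (S κ) := by
    filter_upwards [hκε] with κ hκ
    have hκ0 (i : Fin d) : 0 ≤ κ (0, i) := hε.le.trans (hκ _).1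
    rw [← ENNReal.ofReal_mul (inv_nonneg.2 hε.le)]
    refine ENNReal.ofReal_le_ofReal ((le_inv_mul_iff₀ hε).2 ?_)
    calc ε * (u κ j k - gradV H κ j k) ^ 2
        ≤ κ (0, j) * ∑ k, (u κ j k - gradV H κ j k) ^ 2 :=
          mul_le_mul (hκ _).1 (Finset.single_le_sum (f := fun k => (u κ j k - gradV H κ j k) ^ 2)
            (fun _ _ => sq_nonneg _) (Finset.mem_univ k)) (sq_nonneg _) (hκ0 j)
      _ ≤ S κ := Finset.single_le_sum
          (f := fun j => κ (0, j) * ∑ k, (u κ j k - gradV H κ j k) ^ 2)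
          (fun i _ => mul_nonneg (hκ0 i) (Finset.sum_nonneg fun _ _ => sq_nonneg _))
          (Finset.mem_univ j)
  calc _ ≤ ∫⁻ κ, ENNReal.ofReal ε⁻¹ * ENNReal.ofReal (S κ) ∂ν := lintegral_mono_ae hpt
    _ = ENNReal.ofReal ε⁻¹ * ∫⁻ κ, ENNReal.ofReal (S κ) ∂ν :=
        lintegral_const_mul' _ _ ENNReal.ofReal_ne_top
    _ ≤ ENNReal.ofReal ε⁻¹ * ENNReal.ofReal (ε * δ ^ 2) := by gcongr
    _ = (δ : ℝ≥0∞) ^ 2 := by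
        rw [← ENNReal.ofReal_mul (inv_nonneg.2 hε.le), inv_mul_cancel_left₀ hε.ne',
          ENNReal.ofReal_pow δ.coe_nonneg, ENNReal.ofReal_coe_nnreal]

theorem gradientClosure_cycle_and_extension_general
    (ν : Measure (Cfg d))
    (hTI : TInv ν) (hEll : Elliptic ν)
    (u : Cfg d → Fin d → (Fin d → ℝ))
    (hum : ∀ j, Measurable fun κ => u κ j)
    (hu : MemGradClosV ν u) :
    (∀ᵐ κ ∂ν, ∀ k : Fin d, CycleCond (fun κ' j => u κ' j k) κ) ∧
    ∃ ubar : Cfg d → (Fin d → ℤ) → (Fin d → ℝ),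
      (∀ᵐ κ ∂ν,
        (ubar κ 0 = 0 ∧
          ∀ (x : Fin d → ℤ) (j : Fin d),
            ubar κ (x + sv j 1) - ubar κ x = ubar (shf x κ) (sv j 1)) ∧
        ∀ j, ubar κ (sv j 1) = u κ j) ∧
      ∀ ubar' : Cfg d → (Fin d → ℤ) → (Fin d → ℝ),
        (∀ᵐ κ ∂ν,
          (ubar' κ 0 = 0 ∧
            ∀ (x : Fin d → ℤ) (j : Fin d),
              ubar' κ (x + sv j 1) - ubar' κ x = ubar' (shf x κ) (sv j 1)) ∧
          ∀ j, ubar' κ (sv j 1) = u κ j) →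
        ∀ᵐ κ ∂ν, ∀ x, ubar' κ x = ubar κ x := by
  have hcycle : ∀ᵐ κ ∂ν, ∀ k : Fin d, CycleCond (fun κ' j => u κ' j k) κ :=
    ae_all_iff.2 fun k => hTI.ae_cycleCond one_le_two
      (fun j => (measurable_pi_apply k).comp (hum j)) (hu.isLpLimitOfGrad hEll k)
  refine ⟨hcycle, fun κ x k => pathExt (fun κ' j => u κ' j k) κ x, ?_, ?_⟩
  · filter_upwards [hTI.ae_forall_shf hcycle] with κ hκ
    have hκ0 : ∀ k, CycleCond (fun κ' j => u κ' j k) κ := by simpa using hκ 0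
    refine ⟨⟨funext fun k => pathExt_zero, fun x j => funext fun k => ?_⟩,
      fun j => funext fun k => (hκ0 k).pathExt_sv j⟩
    rw [Pi.sub_apply, (hκ0 k).pathExt_add_sv, (hκ x k).pathExt_sv]
  · intro ubar' hubar'
    filter_upwards [hTI.ae_forall_shf hubar'] with κ hκ x
    obtain ⟨⟨h0, hcov⟩, -⟩ := by simpa using hκ 0
    funext k
    refine eq_pathExt_of_sub_eq (w := fun x => ubar' κ x k) (congrFun h0 k) (fun x j => ?_) x
    rw [← Pi.sub_apply, hcov x j, (hκ x).2 j]

/-- Lemma: cycle condition and shift-covariant extension.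
Every `ℝ^d`-valued vector field `u ∈ L²_∇(ν)` satisfies, `ν`-a.s., the cycle
condition along all finite nearest-neighbor cycles; consequently `u` extends to a
shift-covariant function `ū : Ω × ℤ^d → ℝ^d` with `ū(κ,0) = 0` agreeing with `u`
on the coordinate directions, and this extension is unique up to a `ν`-null set. -/
theorem gradientClosure_cycle_and_extension
    (ν : Measure (Cfg d)) [IsProbabilityMeasure ν]
    (hTI : TInv ν) (hEll : Elliptic ν)
    (u : Cfg d → Fin d → (Fin d → ℝ))
    (hum : ∀ j, Measurable fun κ => u κ j)
    (hu : MemGradClosV ν u) :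
    (∀ᵐ κ ∂ν, ∀ k : Fin d, CycleCond (fun κ' j => u κ' j k) κ) ∧
    ∃ ubar : Cfg d → (Fin d → ℤ) → (Fin d → ℝ),
      (∀ᵐ κ ∂ν,
        (ubar κ 0 = 0 ∧
          ∀ (x : Fin d → ℤ) (j : Fin d),
            ubar κ (x + sv j 1) - ubar κ x = ubar (shf x κ) (sv j 1)) ∧
        ∀ j, ubar κ (sv j 1) = u κ j) ∧
      ∀ ubar' : Cfg d → (Fin d → ℤ) → (Fin d → ℝ),
        (∀ᵐ κ ∂ν,
          (ubar' κ 0 = 0 ∧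
            ∀ (x : Fin d → ℤ) (j : Fin d),
              ubar' κ (x + sv j 1) - ubar' κ x = ubar' (shf x κ) (sv j 1)) ∧
          ∀ j, ubar' κ (sv j 1) = u κ j) →
        ∀ᵐ κ ∂ν, ∀ x, ubar' κ x = ubar κ x :=
  gradientClosure_cycle_and_extension_general ν hTI hEll u hum hu
end
end

section
/- Uniqueness of harmonic shift-covariant functions: Let ν be translation-invariant, ergodic on elliptic conductance configurations. If g : Ω × Z^d → R is shift-covariant, harmonic in the sense that L_κ g(κ, ·) = 0 ν-a.s., square integrable (E_ν|g(·,x)|² < ∞ for |x|=1), and has E_ν(g(·,x)) = 0 for all |x|=1, then g(·,x) = 0 ν-a.s. for all x ∈ Z^d. -/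
open MeasureTheory Real Filter ProbabilityTheory
open scoped ENNReal

noncomputable section

variable {d : ℕ}
/-- The generator `(L_κ f)(x) = Σ_{y: |y-x|=1} κ_{xy} [f(y) - f(x)]` of the random
walk among the conductances `κ` (with `κ_{xy} = κ_{yx}`). -/
def Lgen (κ : Cfg d) (f : (Fin d → ℤ) → ℝ) (x : Fin d → ℤ) : ℝ :=
  ∑ j, (κ (x, j) * (f (x + sv j 1) - f x)
    + κ (x - sv j 1, j) * (f (x - sv j 1) - f x))

/-!
The increments `h_j = g(·, e_j)` form a curl-free, mean-zero vector field in `L²(ν)^d`, and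
harmonicity of `g` at the origin says that the flux `b_j = κ_{0,j} h_j` is divergence-free, i.e.
orthogonal to every gradient `∇f`, `f ∈ L²(ν)`. By ergodicity a curl-free mean-zero field lies in
the closure of the gradients: its component orthogonal to them is curl- and divergence-free, hence
shift invariant, hence constant, hence zero. So `Σ_j E[κ_{0,j} h_j²] = ⟪b, h⟫ = 0`, ellipticity
forces `h = 0`, and the cocycle property propagates this to `g = 0`.
-/

open scoped RealInnerProductSpace

namespace ShiftCovariant

theorem memLp_two_of_lintegral_sq_lt_top {α : Type*} [MeasurableSpace α] {μ : Measure α}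
    {f : α → ℝ} (hf : AEStronglyMeasurable f μ) (h : ∫⁻ x, ENNReal.ofReal (f x ^ 2) ∂μ < ⊤) :
    MemLp f 2 μ :=
  (memLp_two_iff_integrable_sq hf).mpr
    ⟨hf.pow 2, (hasFiniteIntegral_iff_ofReal (.of_forall fun x => sq_nonneg (f x))).mpr h⟩

theorem mul_inner_self_le_inner_of_ae_le {α : Type*} [MeasurableSpace α] {μ : Measure α}
    {c : ℝ} {a : α → ℝ} {f g : Lp ℝ 2 μ} (hg : g =ᵐ[μ] fun x => a x * f x)
    (ha : ∀ᵐ x ∂μ, c ≤ a x) : c * ⟪f, f⟫ ≤ ⟪g, f⟫ := by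
  rw [L2.inner_def, L2.inner_def, ← integral_const_mul]
  refine integral_mono_ae ((L2.integrable_inner f f).const_mul c) (L2.integrable_inner g f) ?_
  filter_upwards [hg, ha] with x hgx hax
  simp only [RCLike.inner_apply, conj_trivial, hgx]
  nlinarith [sq_nonneg (f x)]

theorem eq_zero_of_inner_eq_zero_of_ae_le {ι α : Type*} [Fintype ι] [MeasurableSpace α]
    {μ : Measure α} {ε : ℝ} (hε : 0 < ε) {a : ι → α → ℝ} {u v : PiLp 2 fun _ : ι => Lp ℝ 2 μ}
    (hv : ∀ i, v i =ᵐ[μ] fun x => a i x * u i x) (ha : ∀ i, ∀ᵐ x ∂μ, ε ≤ a i x)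
    (huv : ⟪v, u⟫ = 0) : u = 0 := by
  have hle : ε * ⟪u, u⟫ ≤ ⟪v, u⟫ := by
    rw [PiLp.inner_apply, PiLp.inner_apply, Finset.mul_sum]
    exact Finset.sum_le_sum fun i _ => mul_inner_self_le_inner_of_ae_le (hv i) (ha i)
  rw [huv] at hle
  exact inner_self_eq_zero.mp (le_antisymm (nonpos_of_mul_nonpos_right hle hε)
    real_inner_self_nonneg)

theorem sv_eq_single (j : Fin d) : sv j 1 = Pi.single j 1 := by
  funext i
  simp [sv, Pi.single_apply]

theorem addSubgroup_eq_top_of_sv_mem (S : AddSubgroup (Fin d → ℤ)) (h : ∀ j, sv j 1 ∈ S) :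
    S = ⊤ := by
  rw [← map_eq_top_iff AddSubgroup.toIntSubmodule, eq_top_iff, ← (Pi.basisFun ℤ (Fin d)).span_eq,
    Submodule.span_le]
  rintro _ ⟨j, rfl⟩
  simpa [sv_eq_single] using h j

theorem apply_eq_apply_zero_of_add_sv_eq {β : Type*} {G : (Fin d → ℤ) → β}
    (h : ∀ x j, G (x + sv j 1) = G x) (x : Fin d → ℤ) : G x = G 0 := by
  let S : AddSubgroup (Fin d → ℤ) :=
    { carrier := {v | ∀ y, G (y + v) = G y}
      add_mem' := fun {v w} (hv : ∀ y, _) (hw : ∀ y, _) => show ∀ y, _ from fun y => by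
        rw [← add_assoc, hw, hv]
      zero_mem' := show ∀ y, _ from fun y => by rw [add_zero]
      neg_mem' := fun {v} (hv : ∀ y, _) => show ∀ y, _ from fun y => by
        rw [← hv (y + -v), neg_add_cancel_right] }
  have hx : x ∈ S := addSubgroup_eq_top_of_sv_mem S (fun j y => h y j) ▸ AddSubgroup.mem_top x
  simpa using hx 0

theorem shf_add (x y : Fin d → ℤ) (κ : Cfg d) : shf (x + y) κ = shf x (shf y κ) := by
  funext e
  simp [shf, add_comm x y, add_assoc]

@[simp] theorem shf_zero (κ : Cfg d) : shf 0 κ = κ := by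
  funext e
  simp [shf]

theorem measurable_shf (x : Fin d → ℤ) : Measurable (shf (d := d) x) :=
  measurable_pi_lambda _ fun _ => measurable_pi_apply _

theorem TInv.measurePreserving {ν : Measure (Cfg d)} (hTI : TInv ν) (x : Fin d → ℤ) :
    MeasurePreserving (shf x) ν ν :=
  ⟨measurable_shf x, hTI x⟩

theorem Elliptic.memLp_mul {ν : Measure (Cfg d)} {p : ℝ≥0∞} (hEll : Elliptic ν)
    {f : Cfg d → ℝ} (hf : MemLp f p ν) (e : EdgeZ d) : MemLp (fun κ => κ e * f κ) p ν := by
  obtain ⟨ε, hε, hell⟩ := hEll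
  refine hf.of_le_mul (c := 1 / ε) ((measurable_pi_apply e).aestronglyMeasurable.mul
    hf.aestronglyMeasurable) (hell.mono fun κ hκ => ?_)
  rw [norm_mul, Real.norm_eq_abs, abs_of_pos (hε.trans_le (hκ e).1)]
  exact mul_le_mul_of_nonneg_right (hκ e).2 (norm_nonneg _)

theorem Erg.ae_mem_or_ae_notMem {ν : Measure (Cfg d)} [IsProbabilityMeasure ν] (hErg : Erg ν)
    {A : Set (Cfg d)} (hA : MeasurableSet A) (hinv : ∀ x, shf x ⁻¹' A =ᵐ[ν] A) :
    (∀ᵐ κ ∂ν, κ ∈ A) ∨ (∀ᵐ κ ∂ν, κ ∉ A) := by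
  set B := ⋂ x, shf x ⁻¹' A
  have hBA : B ⊆ A := Set.iInter_subset_of_subset 0 fun κ hκ => by
    rwa [Set.mem_preimage, shf_zero] at hκ
  have hAB : ν (A \ B) = 0 := by
    rw [Set.sdiff_iInter]
    exact measure_iUnion_null fun x => ae_le_set.mp (hinv x).symm.le
  have hB : ∀ y, shf y ⁻¹' B = B := by
    intro y
    ext κ
    simp only [B, Set.mem_iInter, Set.mem_preimage, ← shf_add]
    exact (Equiv.addRight y).forall_congr fun _ => Iff.rfl
  have hBeq : B =ᵐ[ν] A := hBA.eventuallyLE.antisymm (ae_le_set.mpr hAB)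
  rcases hErg B (MeasurableSet.iInter fun x => measurable_shf x hA) hB with h0 | h1
  · right
    rwa [← measure_eq_zero_iff_ae_notMem, ← measure_congr hBeq]
  · left
    rw [measure_congr hBeq] at h1
    exact mem_ae_iff.mpr ((prob_compl_eq_zero_iff hA).mpr h1)

theorem Erg.exists_ae_eq_const {ν : Measure (Cfg d)} [IsProbabilityMeasure ν] (hErg : Erg ν)
    {f : Cfg d → ℝ} (hf : Measurable f) (hinv : ∀ x, f ∘ shf x =ᵐ[ν] f) :
    ∃ c, f =ᵐ[ν] Function.const _ c :=
  exists_eventuallyEq_const_of_forall_separating MeasurableSet fun U hU =>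
    Erg.ae_mem_or_ae_notMem hErg (hf hU) fun x =>
      eventuallyEq_set.mpr <| (hinv x).mono fun _ hκ => iff_of_eq (congrArg (· ∈ U) hκ)

theorem Lgen_zero_eq_neg_sum {g : Cfg d → (Fin d → ℤ) → ℝ} {κ : Cfg d} (h0 : g κ 0 = 0)
    (hcoc : ∀ x j, g κ (x + sv j 1) - g κ x = g (shf x κ) (sv j 1)) :
    Lgen κ (g κ) 0 = -∑ j, (shf (-sv j 1) κ (0, j) * g (shf (-sv j 1) κ) (sv j 1)
      - κ (0, j) * g κ (sv j 1)) := by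
  rw [← Finset.sum_neg_distrib]
  refine Finset.sum_congr rfl fun j _ => ?_
  have h := hcoc (-sv j 1) j
  rw [neg_add_cancel, h0, zero_sub] at h
  simp only [shf, zero_add, zero_sub, h0, sub_zero, ← h]
  ring

section L2

variable {ν : Measure (Cfg d)} (hTI : TInv ν)

def shiftL2 (x : Fin d → ℤ) : Lp ℝ 2 ν →L[ℝ] Lp ℝ 2 ν :=
  (Lp.compMeasurePreservingₗᵢ ℝ (shf x) (TInv.measurePreserving hTI x)).toContinuousLinearMap

theorem coeFn_shiftL2 (x : Fin d → ℤ) (f : Lp ℝ 2 ν) : shiftL2 hTI x f =ᵐ[ν] f ∘ shf x :=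
  Lp.coeFn_compMeasurePreserving f _

theorem shiftL2_toLp {f : Cfg d → ℝ} (hf : MemLp f 2 ν) (x : Fin d → ℤ) :
    shiftL2 hTI x (hf.toLp f) =
      (hf.comp_measurePreserving (TInv.measurePreserving hTI x)).toLp (f ∘ shf x) :=
  rfl

theorem shiftL2_add (x y : Fin d → ℤ) :
    shiftL2 hTI (x + y) = shiftL2 hTI y * shiftL2 hTI x := by
  ext1 f
  apply Lp.ext
  filter_upwards [coeFn_shiftL2 hTI (x + y) f, coeFn_shiftL2 hTI y (shiftL2 hTI x f),
    (TInv.measurePreserving hTI y).quasiMeasurePreserving.ae_eq_comp (coeFn_shiftL2 hTI x f)]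
    with κ h1 h2 h3
  simp only [mul_apply_eq_comp, h1, h2, h3, Function.comp_apply, shf_add]

theorem shiftL2_zero : shiftL2 hTI (0 : Fin d → ℤ) = 1 := by
  ext1 f
  apply Lp.ext
  filter_upwards [coeFn_shiftL2 hTI 0 f] with κ h
  simp [h]

theorem commute_shiftL2 (x y : Fin d → ℤ) : Commute (shiftL2 hTI x) (shiftL2 hTI y) := by
  rw [Commute, SemiconjBy, ← shiftL2_add, ← shiftL2_add, add_comm]

theorem inner_shiftL2_left (x : Fin d → ℤ) (f g : Lp ℝ 2 ν) :
    ⟪shiftL2 hTI x f, g⟫ = ⟪f, shiftL2 hTI (-x) g⟫ := by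
  have hg : g = shiftL2 hTI x (shiftL2 hTI (-x) g) := by
    rw [← mul_apply_eq_comp, ← shiftL2_add, neg_add_cancel, shiftL2_zero, one_apply_eq_self]
  conv_lhs => rw [hg]
  exact LinearIsometry.inner_map_map _ f _

theorem integral_shiftL2 (x : Fin d → ℤ) (f : Lp ℝ 2 ν) :
    ∫ κ, shiftL2 hTI x f κ ∂ν = ∫ κ, f κ ∂ν := by
  rw [integral_congr_ae (coeFn_shiftL2 hTI x f)]
  have hF := Lp.aestronglyMeasurable f
  generalize (f : Cfg d → ℝ) = F at hF ⊢
  exact (integral_map (measurable_shf x).aemeasurable (by rwa [hTI x])).symm.trans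
    (by rw [hTI x])

def fwdDiff (j : Fin d) : Lp ℝ 2 ν →L[ℝ] Lp ℝ 2 ν := shiftL2 hTI (sv j 1) - 1

def bwdDiff (j : Fin d) : Lp ℝ 2 ν →L[ℝ] Lp ℝ 2 ν := shiftL2 hTI (-sv j 1) - 1

theorem fwdDiff_toLp {f : Cfg d → ℝ} (hf : MemLp f 2 ν) (j : Fin d) :
    fwdDiff hTI j (hf.toLp f) =
      ((hf.comp_measurePreserving (TInv.measurePreserving hTI _)).sub hf).toLp
        (f ∘ shf (sv j 1) - f) := by
  rw [fwdDiff, sub_apply, one_apply_eq_self, shiftL2_toLp, MemLp.toLp_sub]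

theorem bwdDiff_toLp {f : Cfg d → ℝ} (hf : MemLp f 2 ν) (j : Fin d) :
    bwdDiff hTI j (hf.toLp f) =
      ((hf.comp_measurePreserving (TInv.measurePreserving hTI _)).sub hf).toLp
        (f ∘ shf (-sv j 1) - f) := by
  rw [bwdDiff, sub_apply, one_apply_eq_self, shiftL2_toLp, MemLp.toLp_sub]

theorem fwdDiff_eq_zero_iff (j : Fin d) (f : Lp ℝ 2 ν) :
    fwdDiff hTI j f = 0 ↔ shiftL2 hTI (sv j 1) f = f := by
  rw [fwdDiff, sub_apply, one_apply_eq_self, sub_eq_zero]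

theorem inner_fwdDiff_left (j : Fin d) (f g : Lp ℝ 2 ν) :
    ⟪fwdDiff hTI j f, g⟫ = ⟪f, bwdDiff hTI j g⟫ := by
  simp only [fwdDiff, bwdDiff, sub_apply, one_apply_eq_self, inner_sub_left,
    inner_sub_right, inner_shiftL2_left]

theorem commute_shiftL2_sub_one (x y : Fin d → ℤ) :
    Commute (shiftL2 hTI x - 1) (shiftL2 hTI y - 1) :=
  ((commute_shiftL2 hTI x y).sub_left (.one_left _)).sub_right (.one_right _)

theorem fwdDiff_fwdDiff_comm (i j : Fin d) (f : Lp ℝ 2 ν) :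
    fwdDiff hTI i (fwdDiff hTI j f) = fwdDiff hTI j (fwdDiff hTI i f) :=
  congrArg (· f) (commute_shiftL2_sub_one hTI _ _).eq

theorem fwdDiff_bwdDiff_comm (i j : Fin d) (f : Lp ℝ 2 ν) :
    fwdDiff hTI i (bwdDiff hTI j f) = bwdDiff hTI j (fwdDiff hTI i f) :=
  congrArg (· f) (commute_shiftL2_sub_one hTI _ _).eq

def meanL2 (ν : Measure (Cfg d)) [IsFiniteMeasure ν] : Lp ℝ 2 ν →L[ℝ] ℝ :=
  innerSL ℝ (indicatorConstLp 2 MeasurableSet.univ (measure_ne_top ν _) (1 : ℝ))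

theorem meanL2_apply [IsFiniteMeasure ν] (f : Lp ℝ 2 ν) : meanL2 ν f = ∫ κ, f κ ∂ν := by
  rw [meanL2, innerSL_apply_apply, L2.inner_indicatorConstLp_one, Measure.restrict_univ]

theorem meanL2_fwdDiff [IsFiniteMeasure ν] (j : Fin d) (f : Lp ℝ 2 ν) :
    meanL2 ν (fwdDiff hTI j f) = 0 := by
  rw [fwdDiff, sub_apply, map_sub, meanL2_apply, meanL2_apply,
    integral_shiftL2, one_apply_eq_self, sub_self]

theorem eq_zero_of_fwdDiff_eq_zero [IsProbabilityMeasure ν] (hErg : Erg ν) {f : Lp ℝ 2 ν}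
    (hf : ∀ j, fwdDiff hTI j f = 0) (hmean : meanL2 ν f = 0) : f = 0 := by
  have hinv : ∀ x, ⇑f ∘ shf x =ᵐ[ν] f := fun x => by
    have hx : shiftL2 hTI x f = f := by
      refine (apply_eq_apply_zero_of_add_sv_eq (G := fun x => shiftL2 hTI x f)
        (fun y j => ?_) x).trans (by rw [shiftL2_zero, one_apply_eq_self])
      rw [add_comm, shiftL2_add, mul_apply_eq_comp, (fwdDiff_eq_zero_iff hTI j f).mp (hf j)]
    exact (coeFn_shiftL2 hTI x f).symm.trans (by rw [hx])
  obtain ⟨c, hc⟩ := Erg.exists_ae_eq_const hErg (Lp.stronglyMeasurable f).measurable hinv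
  have hc0 : c = 0 := by
    rw [meanL2_apply, integral_congr_ae hc] at hmean
    simpa using hmean
  exact Lp.ext (hc.trans (hc0 ▸ (Lp.coeFn_zero ℝ 2 ν).symm))

abbrev L2Vec (ν : Measure (Cfg d)) := PiLp 2 fun _ : Fin d => Lp ℝ 2 ν

def grad : Lp ℝ 2 ν →L[ℝ] L2Vec ν :=
  (PiLp.continuousLinearEquiv 2 ℝ _).symm.toContinuousLinearMap.comp
    (ContinuousLinearMap.pi fun j => fwdDiff hTI j)

theorem grad_apply (f : Lp ℝ 2 ν) (j : Fin d) : grad hTI f j = fwdDiff hTI j f := rfl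

def divergence (u : L2Vec ν) : Lp ℝ 2 ν := ∑ j, bwdDiff hTI j (u j)

def curl (i j : Fin d) : L2Vec ν →L[ℝ] Lp ℝ 2 ν :=
  fwdDiff hTI i ∘L PiLp.proj 2 _ j - fwdDiff hTI j ∘L PiLp.proj 2 _ i

theorem curl_apply (i j : Fin d) (u : L2Vec ν) :
    curl hTI i j u = fwdDiff hTI i (u j) - fwdDiff hTI j (u i) := rfl

theorem curl_grad (i j : Fin d) (f : Lp ℝ 2 ν) : curl hTI i j (grad hTI f) = 0 := by
  rw [curl_apply, grad_apply, grad_apply, fwdDiff_fwdDiff_comm, sub_self]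

theorem inner_grad_left (f : Lp ℝ 2 ν) (u : L2Vec ν) :
    ⟪grad hTI f, u⟫ = ⟪f, divergence hTI u⟫ := by
  simp only [PiLp.inner_apply, grad_apply, inner_fwdDiff_left, divergence, inner_sum]

def potentialFields : Submodule ℝ (L2Vec ν) :=
  (LinearMap.range (grad hTI : Lp ℝ 2 ν →ₗ[ℝ] L2Vec ν)).topologicalClosure

theorem map_eq_zero_of_mem_potentialFields {F : Type*} [NormedAddCommGroup F] [NormedSpace ℝ F]
    (L : L2Vec ν →L[ℝ] F) (hL : ∀ f, L (grad hTI f) = 0) {u : L2Vec ν}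
    (hu : u ∈ potentialFields hTI) : L u = 0 :=
  Submodule.topologicalClosure_minimal (LinearMap.range (grad hTI : Lp ℝ 2 ν →ₗ[ℝ] L2Vec ν))
    (t := LinearMap.ker (L : L2Vec ν →ₗ[ℝ] F)) (by rintro _ ⟨f, rfl⟩; exact hL f) L.isClosed_ker hu

theorem mem_orthogonal_potentialFields_iff {u : L2Vec ν} :
    u ∈ (potentialFields hTI)ᗮ ↔ divergence hTI u = 0 := by
  rw [potentialFields, Submodule.orthogonal_closure, Submodule.mem_orthogonal]
  simp only [LinearMap.mem_range, forall_exists_index, forall_apply_eq_imp_iff,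
    ContinuousLinearMap.coe_coe, inner_grad_left]
  exact ⟨fun h => inner_self_eq_zero.mp (h _), fun h f => by rw [h, inner_zero_right]⟩

theorem fwdDiff_eq_zero_of_curl_of_divergence {u : L2Vec ν}
    (hcurl : ∀ i j, curl hTI i j u = 0) (hdiv : divergence hTI u = 0) (k j : Fin d) :
    fwdDiff hTI k (u j) = 0 := by
  have hcomm : ∀ i j, fwdDiff hTI i (u j) = fwdDiff hTI j (u i) := fun i j =>
    sub_eq_zero.mp (hcurl i j)
  have hsum : ∑ j, ⟪fwdDiff hTI k (u j), fwdDiff hTI k (u j)⟫ = 0 :=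
    calc ∑ j, ⟪fwdDiff hTI k (u j), fwdDiff hTI k (u j)⟫
        = ∑ j, ⟪fwdDiff hTI j (u k), fwdDiff hTI k (u j)⟫ :=
          Finset.sum_congr rfl fun j _ => by rw [hcomm k j]
      _ = ⟪u k, fwdDiff hTI k (divergence hTI u)⟫ := by
          simp only [inner_fwdDiff_left, ← fwdDiff_bwdDiff_comm, divergence, map_sum, inner_sum]
      _ = 0 := by rw [hdiv, map_zero, inner_zero_right]
  exact inner_self_eq_zero.mp <| (Finset.sum_eq_zero_iff_of_nonneg fun _ _ =>
    real_inner_self_nonneg).mp hsum j (Finset.mem_univ j)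

theorem mem_potentialFields_of_curl_eq_zero [IsProbabilityMeasure ν] (hErg : Erg ν)
    {h : L2Vec ν} (hcurl : ∀ i j, curl hTI i j h = 0) (hmean : ∀ j, meanL2 ν (h j) = 0) :
    h ∈ potentialFields hTI := by
  set K := potentialFields hTI
  have : CompleteSpace K := (Submodule.isClosed_topologicalClosure _).completeSpace_coe
  have hp : K.starProjection h ∈ K := K.starProjection_apply_mem h
  set r := h - K.starProjection h
  have hr : r ∈ Kᗮ := K.sub_starProjection_mem_orthogonal h
  have hrcurl : ∀ i j, curl hTI i j r = 0 := fun i j => by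
    rw [map_sub, hcurl,
      map_eq_zero_of_mem_potentialFields hTI (curl hTI i j) (curl_grad hTI i j) hp, sub_zero]
  have hrmean : ∀ j, meanL2 ν (r j) = 0 := fun j => by
    have hpmean := map_eq_zero_of_mem_potentialFields hTI (meanL2 ν ∘L PiLp.proj 2 _ j)
      (fun f => meanL2_fwdDiff hTI j f) hp
    rw [ContinuousLinearMap.comp_apply, PiLp.proj_apply] at hpmean
    rw [PiLp.sub_apply, map_sub, hmean, hpmean, sub_zero]
  have hr0 : r = 0 := PiLp.ext fun j => eq_zero_of_fwdDiff_eq_zero hTI hErg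
    (fun k => fwdDiff_eq_zero_of_curl_of_divergence hTI hrcurl
      ((mem_orthogonal_potentialFields_iff hTI).mp hr) k j) (hrmean j)
  rw [sub_eq_zero] at hr0
  exact hr0 ▸ hp

theorem inner_eq_zero_of_divergence_eq_zero [IsProbabilityMeasure ν] (hErg : Erg ν)
    {b h : L2Vec ν} (hdiv : divergence hTI b = 0) (hcurl : ∀ i j, curl hTI i j h = 0)
    (hmean : ∀ j, meanL2 ν (h j) = 0) : ⟪b, h⟫ = 0 :=
  Submodule.inner_left_of_mem_orthogonal
    (mem_potentialFields_of_curl_eq_zero hTI hErg hcurl hmean)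
    ((mem_orthogonal_potentialFields_iff hTI).mpr hdiv)

end L2

def toL2Vec {ν : Measure (Cfg d)} {F : Fin d → Cfg d → ℝ} (hF : ∀ j, MemLp (F j) 2 ν) :
    L2Vec ν :=
  WithLp.toLp 2 fun j => (hF j).toLp (F j)

section Cocycle

variable {ν : Measure (Cfg d)} (hTI : TInv ν) {g : Cfg d → (Fin d → ℤ) → ℝ}

theorem curl_toL2Vec_eq_zero (hg : ∀ j, MemLp (fun κ => g κ (sv j 1)) 2 ν)
    (hcoc : ∀ᵐ κ ∂ν, ∀ x j, g κ (x + sv j 1) - g κ x = g (shf x κ) (sv j 1)) (i j : Fin d) :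
    curl hTI i j (toL2Vec hg) = 0 := by
  rw [curl_apply, sub_eq_zero, toL2Vec, PiLp.toLp_apply, PiLp.toLp_apply, fwdDiff_toLp,
    fwdDiff_toLp, MemLp.toLp_eq_toLp_iff]
  filter_upwards [hcoc] with κ hκ
  have hij := hκ (sv i 1) j
  have hji := hκ (sv j 1) i
  rw [add_comm] at hji
  simp only [Pi.sub_apply, Function.comp_apply]
  linarith

theorem divergence_toL2Vec_eq_zero
    (hb : ∀ j, MemLp (fun κ => κ (0, j) * g κ (sv j 1)) 2 ν)
    (hcov : ∀ᵐ κ ∂ν, g κ 0 = 0 ∧ ∀ x j, g κ (x + sv j 1) - g κ x = g (shf x κ) (sv j 1))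
    (hharm : ∀ᵐ κ ∂ν, Lgen κ (g κ) 0 = 0) :
    divergence hTI (toL2Vec hb) = 0 := by
  have hterm : ∀ᵐ κ ∂ν, ∀ j, bwdDiff hTI j (toL2Vec hb j) κ =
      shf (-sv j 1) κ (0, j) * g (shf (-sv j 1) κ) (sv j 1) - κ (0, j) * g κ (sv j 1) :=
    ae_all_iff.mpr fun j => by
      rw [toL2Vec, PiLp.toLp_apply, bwdDiff_toLp]
      exact MemLp.coeFn_toLp _
  apply Lp.ext
  filter_upwards [Lp.coeFn_fun_finsetSum Finset.univ fun j => bwdDiff hTI j (toL2Vec hb j),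
    hterm, hcov, hharm, Lp.coeFn_zero ℝ 2 ν] with κ hsum hterm hκ hL hzero
  rw [divergence, hsum, hzero, Pi.zero_apply, Finset.sum_congr rfl fun j _ => hterm j,
    ← neg_eq_zero, ← Lgen_zero_eq_neg_sum hκ.1 hκ.2, hL]

end Cocycle

end ShiftCovariant

open ShiftCovariant

/-- Lemma: uniqueness of harmonic shift-covariant functions.
Let `ν` be translation-invariant and ergodic on elliptic conductance
configurations.  If `g : Ω × ℤ^d → ℝ` is shift-covariant with `g(κ,0) = 0`,
harmonic (`L_κ g(κ,·) = 0` ν-a.s.), square integrable on the coordinate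
directions, and has mean zero there, then `g(·,x) = 0` ν-a.s. for every `x`. -/
theorem harmonic_shift_covariant_zero_mean_vanishes
    (ν : Measure (Cfg d)) [IsProbabilityMeasure ν]
    (hTI : TInv ν) (hErg : Erg ν) (hEll : Elliptic ν)
    (g : Cfg d → (Fin d → ℤ) → ℝ)
    (hgm : ∀ x, Measurable fun κ => g κ x)
    (hcov : ∀ᵐ κ ∂ν, g κ 0 = 0 ∧
      ∀ (x : Fin d → ℤ) (j : Fin d),
        g κ (x + sv j 1) - g κ x = g (shf x κ) (sv j 1))
    (hharm : ∀ᵐ κ ∂ν, ∀ x, Lgen κ (g κ) x = 0)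
    (hg2 : ∀ j : Fin d, ∫⁻ κ, ENNReal.ofReal ((g κ (sv j 1)) ^ 2) ∂ν < ⊤)
    (hmean : ∀ j : Fin d, ∫ κ, g κ (sv j 1) ∂ν = 0) :
    ∀ x, ∀ᵐ κ ∂ν, g κ x = 0 := by
  have hg : ∀ j, MemLp (fun κ => g κ (sv j 1)) 2 ν := fun j =>
    memLp_two_of_lintegral_sq_lt_top (hgm _).aestronglyMeasurable (hg2 j)
  have hb : ∀ j, MemLp (fun κ => κ (0, j) * g κ (sv j 1)) 2 ν := fun j =>
    Elliptic.memLp_mul hEll (hg j) (0, j)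
  have hmeanL2 : ∀ j, meanL2 ν (toL2Vec hg j) = 0 := fun j => by
    rw [toL2Vec, PiLp.toLp_apply, meanL2_apply, integral_congr_ae (MemLp.coeFn_toLp _), hmean j]
  have horth : ⟪toL2Vec hb, toL2Vec hg⟫ = 0 := inner_eq_zero_of_divergence_eq_zero hTI hErg
    (divergence_toL2Vec_eq_zero hTI hb hcov (hharm.mono fun _ h => h 0))
    (curl_toL2Vec_eq_zero hTI hg (hcov.mono fun _ h => h.2)) hmeanL2
  obtain ⟨ε, hε, hell⟩ := hEll
  have hzero : toL2Vec hg = 0 := eq_zero_of_inner_eq_zero_of_ae_le hε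
    (fun j => (hb j).coeFn_toLp.trans ((hg j).coeFn_toLp.mono fun κ h => congrArg _ h.symm))
    (fun j => hell.mono fun κ h => (h (0, j)).1) horth
  have hgrad : ∀ j, ∀ᵐ κ ∂ν, g κ (sv j 1) = 0 := fun j =>
    (hg j).coeFn_toLp.symm.trans (Lp.eq_zero_iff_ae_eq_zero.mp (congrArg (· j) hzero))
  have hshift : ∀ᵐ κ ∂ν, ∀ x j, g (shf x κ) (sv j 1) = 0 := ae_all_iff.mpr fun x =>
    ae_all_iff.mpr fun j => (TInv.measurePreserving hTI x).quasiMeasurePreserving.ae (hgrad j)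
  intro x
  filter_upwards [hcov, hshift] with κ hκ hzero
  rw [apply_eq_apply_zero_of_add_sv_eq (G := g κ)
    (fun y j => by linarith [hκ.2 y j, hzero y j]) x, hκ.1]
end
end
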